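/- The only positive integer solutions (n, l, k) with l ≥ 3 to the equation F_n = F_l^k * (F_l - 1) are (n, l, k) = (3, 3, 1) and (6, 3, 3). -/

import Mathlib

/-!
If `F l` is a power of two, then `l = 3` or `l = 6`. For `l = 3` the equation reads `F n = 2 ^ k`;
for `l = 6` it reads `F n = 8 ^ k * 7`, impossible since `7 ∣ F n` forces `8 ∣ n` and then
`3 = F 4 ∣ F n`.

Otherwise `F l` has an odd prime factor `p`; let `u` be the exact power of `p` dividing `F l`.
Since `F l ∣ F n`, `n = l * m`, and `F l ^ m ≤ F (l * m) < F l ^ (k + 1)` gives `m ≤ k`.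
Expanding `Q ^ (l * m) = (F l • Q + F (l - 1) • 1) ^ m` for the Fibonacci matrix `Q` gives the
lifting-the-exponent bound `u ^ (k - 1) ∣ m`, so `3 ^ (k - 1) ≤ m ≤ k`. Hence `k = m = 1` and
`F l = F l * (F l - 1)`, which is absurd as `F l ≥ 3`.
-/

open Nat Finset

abbrev fibMatrix : Matrix (Fin 2) (Fin 2) ℕ := !![1, 1; 1, 0]

theorem fibMatrix_pow_succ (n : ℕ) :
    fibMatrix ^ (n + 1) = !![fib (n + 2), fib (n + 1); fib (n + 1), fib n] := by
  induction n with
  | zero => simp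
  | succ n ih =>
    rw [pow_succ, ih, Matrix.mul_fin_two]
    ext i j
    fin_cases i <;> fin_cases j <;> simp [fib_add_two] <;> ring

theorem fibMatrix_pow_apply_zero_one (n : ℕ) : (fibMatrix ^ n) 0 1 = fib n := by
  cases n with
  | zero => rfl
  | succ n => simp [fibMatrix_pow_succ]

theorem fibMatrix_pow_eq {l : ℕ} (hl : l ≠ 0) :
    fibMatrix ^ l = fib l • fibMatrix + fib (l - 1) • 1 := by
  obtain ⟨l, rfl⟩ := exists_eq_succ_of_ne_zero hl
  rw [fibMatrix_pow_succ, Matrix.one_fin_two]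
  ext i j
  fin_cases i <;> fin_cases j <;> simp [fib_add_two, add_comm]

theorem fib_mul_eq_sum {l : ℕ} (hl : l ≠ 0) (m : ℕ) :
    fib (l * m) = ∑ i ∈ range (m + 1),
      fib l ^ i * fib (l - 1) ^ (m - i) * m.choose i * fib i := by
  have hcomm : Commute (fib l • fibMatrix) (fib (l - 1) • 1) :=
    ((Commute.one_right _).smul_right _).smul_left _
  rw [← fibMatrix_pow_apply_zero_one, pow_mul, fibMatrix_pow_eq hl, hcomm.add_pow,
    Matrix.sum_apply]
  refine sum_congr rfl fun i _ => ?_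
  rw [smul_pow, smul_pow, one_pow, smul_mul_smul, mul_one, ← Nat.cast_comm, ← nsmul_eq_mul,
    smul_smul, Matrix.smul_apply, fibMatrix_pow_apply_zero_one, smul_eq_mul]
  ring

theorem factorization_le_sub_two {p i : ℕ} (hp : 3 ≤ p) (hi : 2 ≤ i) :
    i.factorization p ≤ i - 2 := by
  set v := i.factorization p
  have hpow : p ^ v ≤ i := le_of_dvd (by omega) (ordProj_dvd i p)
  have hbern : 1 + v * 2 ≤ 3 ^ v := one_add_le_pow_of_two_add_nonneg (by norm_num) v
  have : 3 ^ v ≤ p ^ v := Nat.pow_le_pow_left hp v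
  omega

theorem pow_add_two_dvd_mul_pow {u j c i : ℕ} (hu : Odd u) (hi : 2 ≤ i) (h : u ^ j ∣ c * i) :
    u ^ (j + 2) ∣ c * u ^ i := by
  rcases eq_or_ne c 0 with rfl | hc
  · simp
  have hu0 : u ≠ 0 := hu.pos.ne'
  rw [← factorization_prime_le_iff_dvd (by positivity) (by positivity)]
  intro p hp
  have hj := (factorization_le_iff_dvd (by positivity) (by positivity)).2 h p
  simp only [factorization_pow, Nat.factorization_mul hc (by positivity : i ≠ 0),
    Nat.factorization_mul hc (pow_ne_zero i hu0), Finsupp.smul_apply, Finsupp.coe_add,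
    Pi.add_apply, smul_eq_mul] at hj ⊢
  rcases Nat.eq_zero_or_pos (u.factorization p) with ha | ha
  · simp [ha]
  have hp3 : 3 ≤ p := by
    obtain ⟨r, rfl⟩ := hu.of_dvd_nat (dvd_of_factorization_pos ha.ne')
    have := hp.two_le
    omega
  have hi2 := factorization_le_sub_two hp3 hi
  obtain ⟨i, rfl⟩ := Nat.exists_eq_add_of_le hi
  simp only [Nat.add_sub_cancel_left] at hi2
  nlinarith

theorem pow_dvd_of_pow_succ_dvd_fib_mul {u w l j m : ℕ} (hu : Odd u) (hl : l ≠ 0)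
    (hfib : fib l = u * w) (huw : Coprime u w) (h : u ^ (j + 1) ∣ fib (l * m)) :
    u ^ j ∣ m := by
  induction j with
  | zero => exact (pow_zero u).symm ▸ one_dvd m
  | succ j ih =>
    have hj : u ^ j ∣ m := ih (dvd_trans (pow_dvd_pow u (by omega)) h)
    obtain _ | m := m
    · exact dvd_zero _
    set f : ℕ → ℕ := fun i => fib l ^ i * fib (l - 1) ^ (m + 1 - i) * (m + 1).choose i * fib i
    have hsum : fib (l * (m + 1)) = ∑ i ∈ range m, f (i + 2) + f 1 + f 0 := by
      rw [fib_mul_eq_sum hl, sum_range_succ', sum_range_succ']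
    have hhigher : u ^ (j + 2) ∣ ∑ i ∈ range m, f (i + 2) := by
      refine dvd_sum fun i _ => ?_
      have hchoose : u ^ j ∣ (m + 1).choose (i + 2) * (i + 2) :=
        hj.trans ⟨m.choose (i + 1), (add_one_mul_choose_eq m (i + 1)).symm⟩
      have hf : f (i + 2) = (m + 1).choose (i + 2) * u ^ (i + 2) *
          (w ^ (i + 2) * fib (l - 1) ^ (m + 1 - (i + 2)) * fib (i + 2)) := by
        simp only [f, hfib]
        ring
      rw [hf]
      exact (pow_add_two_dvd_mul_pow hu (by omega) hchoose).mul_right _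
    have hf1 : f 1 = u * ((m + 1) * (w * fib (l - 1) ^ m)) := by
      simp only [f, hfib, choose_one_right, fib_one, Nat.add_sub_cancel]
      ring_nf
    have hf0 : f 0 = 0 := by simp [f]
    have hcop : Coprime u (w * fib (l - 1) ^ m) := by
      refine huw.mul_right (Coprime.pow_right _ ?_)
      have := (fib_coprime_fib_succ (l - 1)).symm
      rw [Nat.sub_add_cancel (by omega), hfib] at this
      exact this.coprime_mul_right
    have hlinear : u ^ (j + 1 + 1) ∣ f 1 := by
      rw [hsum, hf0, add_zero] at h
      exact (Nat.dvd_add_right hhigher).1 h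
    rw [hf1, _root_.pow_succ'] at hlinear
    exact (hcop.pow_left _).dvd_of_dvd_mul_right (Nat.dvd_of_mul_dvd_mul_left hu.pos hlinear)

theorem fib_mul_fib_le_fib_add (a b : ℕ) : fib a * fib b ≤ fib (a + b) := by
  cases b with
  | zero => simp
  | succ b =>
    rw [← add_assoc, fib_add]
    calc fib a * fib (b + 1) ≤ fib (a + 1) * fib (b + 1) := Nat.mul_le_mul_right _ fib_le_fib_succ
      _ ≤ _ := Nat.le_add_left _ _

theorem fib_pow_le_fib_mul (l : ℕ) {m : ℕ} (hm : m ≠ 0) : fib l ^ m ≤ fib (l * m) := by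
  induction m, Nat.one_le_iff_ne_zero.2 hm using Nat.le_induction with
  | base => simp
  | succ m _ ih =>
    calc fib l ^ (m + 1) = fib l ^ m * fib l := pow_succ _ _
      _ ≤ fib (l * m) * fib l := Nat.mul_le_mul_right _ (ih (by omega))
      _ ≤ fib (l * (m + 1)) := by rw [mul_add_one]; exact fib_mul_fib_le_fib_add _ _

theorem dvd_of_dvd_fib {d a n : ℕ} (ha : a ≠ 0) (hda : d ∣ fib a)
    (hmin : ∀ g ∈ a.properDivisors, ¬d ∣ fib g) (hdn : d ∣ fib n) : a ∣ n := by
  have hgcd : d ∣ fib (Nat.gcd a n) := fib_gcd a n ▸ Nat.dvd_gcd hda hdn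
  by_contra han
  refine hmin _ (mem_properDivisors.2 ⟨Nat.gcd_dvd_left a n, ?_⟩) hgcd
  exact lt_of_le_of_ne (le_of_dvd (pos_of_ne_zero ha) (Nat.gcd_dvd_left a n))
    fun h => han (h ▸ Nat.gcd_dvd_right a n)

theorem dvd_of_fib_dvd_fib {l n : ℕ} (hl : 3 ≤ l) (h : fib l ∣ fib n) : l ∣ n := by
  refine dvd_of_dvd_fib (by omega) dvd_rfl (fun g hg => ?_) h
  obtain ⟨hgl, hlt⟩ := mem_properDivisors.1 hg
  have hg0 : g ≠ 0 := by rintro rfl; simp at hgl; omega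
  refine Nat.not_dvd_of_pos_of_lt (fib_pos.2 (pos_of_ne_zero hg0)) ?_
  calc fib g ≤ fib (l - 1) := fib_mono (by omega)
    _ < fib l := by
      have := fib_lt_fib_succ (n := l - 1) (by omega)
      rwa [Nat.sub_add_cancel (by omega)] at this

theorem fib_eq_two_pow_iff {n e : ℕ} :
    fib n = 2 ^ e ↔ n = 1 ∧ e = 0 ∨ n = 2 ∧ e = 0 ∨ n = 3 ∧ e = 1 ∨ n = 6 ∧ e = 3 := by
  refine ⟨fun h => ?_, by rintro (⟨rfl, rfl⟩ | ⟨rfl, rfl⟩ | ⟨rfl, rfl⟩ | ⟨rfl, rfl⟩) <;> rfl⟩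
  have he : e ≤ 3 := by
    by_contra! he
    have h12 : 12 ∣ n := dvd_of_dvd_fib (by norm_num) (by decide : 16 ∣ fib 12) (by decide)
      (h ▸ pow_dvd_pow 2 he)
    have h3 : 3 ∣ 2 ^ e := h ▸ fib_dvd 4 n (dvd_trans (by norm_num) h12)
    exact absurd (prime_three.dvd_of_dvd_pow h3) (by norm_num)
  have hn : n < 7 := by
    by_contra! hn
    have : fib 7 ≤ 2 ^ 3 :=
      calc fib 7 ≤ fib n := fib_mono hn
        _ = 2 ^ e := h
        _ ≤ 2 ^ 3 := Nat.pow_le_pow_right two_pos he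
    exact absurd this (by decide)
  interval_cases n <;> interval_cases e <;> revert h <;> decide

theorem fib_ne_eight_pow_mul_seven (n k : ℕ) : fib n ≠ 8 ^ k * 7 := by
  intro h
  have h8 : 8 ∣ n :=
    dvd_of_dvd_fib (by norm_num) (by decide : 7 ∣ fib 8) (by decide) (h ▸ dvd_mul_left 7 _)
  have h3 : 3 ∣ 8 ^ k * 7 := h ▸ fib_dvd 4 n (dvd_trans (by norm_num) h8)
  have hcop : Coprime 3 (8 ^ k * 7) := (Coprime.pow_right k (by norm_num)).mul_right (by norm_num)
  exact absurd (hcop.eq_one_of_dvd h3) (by norm_num)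

theorem fib_ne_fib_pow_mul_fib_sub_one_of_odd_prime_dvd {n l k p : ℕ} (hn : n ≠ 0) (hl : 3 ≤ l)
    (hk : k ≠ 0) (hp : p.Prime) (hodd : Odd p) (hpl : p ∣ fib l) :
    fib n ≠ fib l ^ k * (fib l - 1) := by
  intro h
  have hp3 : 3 ≤ p := by
    obtain ⟨r, rfl⟩ := hodd
    have := hp.two_le
    omega
  have hfl : 3 ≤ fib l := hp3.trans (le_of_dvd (fib_pos.2 (by omega)) hpl)
  obtain ⟨m, rfl⟩ : l ∣ n :=
    dvd_of_fib_dvd_fib hl (h ▸ dvd_mul_of_dvd_left (dvd_pow_self _ hk) _)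
  have hm : m ≠ 0 := right_ne_zero_of_mul hn
  set u := ordProj[p] (fib l)
  have hpu : p ≤ u :=
    le_of_dvd (by positivity) (dvd_pow_self p (hp.factorization_pos_of_dvd (by omega) hpl).ne')
  have hmk : m ≤ k := by
    have hlt : fib l ^ m < fib l ^ (k + 1) := calc
      fib l ^ m ≤ fib (l * m) := fib_pow_le_fib_mul l hm
      _ = fib l ^ k * (fib l - 1) := h
      _ < fib l ^ k * fib l := Nat.mul_lt_mul_of_pos_left (by omega) (by positivity)
      _ = fib l ^ (k + 1) := (pow_succ _ _).symm
    have := (Nat.pow_lt_pow_iff_right (by omega)).1 hlt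
    omega
  have hum : u ^ (k - 1) ∣ m := by
    refine pow_dvd_of_pow_succ_dvd_fib_mul hodd.pow (by omega)
      (ordProj_mul_ordCompl_eq_self (fib l) p).symm ((coprime_ordCompl hp (by omega)).pow_left _) ?_
    rw [Nat.sub_add_cancel (one_le_iff_ne_zero.2 hk), h]
    exact dvd_mul_of_dvd_left (pow_dvd_pow_of_dvd (ordProj_dvd _ _) k) _
  have hk1 : k = 1 := by
    have hbern : 1 + (k - 1) * 2 ≤ 3 ^ (k - 1) := one_add_le_pow_of_two_add_nonneg (by norm_num) _
    have : 3 ^ (k - 1) ≤ u ^ (k - 1) := Nat.pow_le_pow_left (hp3.trans hpu) _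
    have := le_of_dvd (pos_of_ne_zero hm) hum
    omega
  obtain rfl : m = 1 := by omega
  subst hk1
  rw [mul_one, pow_one] at h
  have : fib l * 1 < fib l * (fib l - 1) := Nat.mul_lt_mul_of_pos_left (by omega) (by omega)
  omega

theorem fib_eq_fib_pow_mul_fib_sub_one (n l k : ℕ)
    (hn : 1 ≤ n) (hl : 3 ≤ l) (hk : 1 ≤ k) :
    Nat.fib n = Nat.fib l ^ k * (Nat.fib l - 1) ↔
      (n = 3 ∧ l = 3 ∧ k = 1) ∨ (n = 6 ∧ l = 3 ∧ k = 3) := by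
  refine ⟨fun h => ?_, by rintro (⟨rfl, rfl, rfl⟩ | ⟨rfl, rfl, rfl⟩) <;> decide⟩
  obtain ⟨e, he⟩ | ⟨p, hp, hpl, hodd⟩ := (fib l).eq_two_pow_or_exists_odd_prime_and_dvd
  · obtain rfl | rfl : l = 3 ∨ l = 6 := by have := fib_eq_two_pow_iff.1 he; omega
    · have := fib_eq_two_pow_iff.1 (h.trans (by simp [fib_add_two]) : fib n = 2 ^ k)
      omega
    · exact absurd h (fib_ne_eight_pow_mul_seven n k)
  · exact absurd h
      (fib_ne_fib_pow_mul_fib_sub_one_of_odd_prime_dvd (by omega) hl (by omega) hp hodd hpl)
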